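/- Let f : [0,t₀] → 𝔾 be a horizontal curve in a step-s Carnot group with f(0) = 0 and with C¹ horizontal components satisfying |f_i'(t) − f_i'(0)| ≤ ω(t) for i ≤ n. Then for every non-horizontal index i ∈ {n+1,…,N} and all t ∈ [0,t₀], one has |f_i(t)| ≤ C·t^{d_i}·ω(t), with C depending only on ω, 𝔾, t₀, and the |f_j'(0)| for j ≤ n. -/

import Mathlib

open scoped BigOperators

/-- The Euclidean norm on `ℝ^N` in coordinates. -/
noncomputable def eucNorm {N : ℕ} (x : Fin N → ℝ) : ℝ :=
  Real.sqrt (∑ i, (x i) ^ 2)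

/-- A coordinatized step-`s` Carnot group structure on `ℝ^N` (exponential
coordinates adapted to the stratification, group law `x·y = x + y + Q x y`
coming from the Baker–Campbell–Hausdorff formula, homogeneous degrees `d i`,
first layer `V₁` of dimension `n`, and homogeneous norm
`‖x‖ = max_i μ i * |x i| ^ (1 / d i)` satisfying the triangle inequality). -/
structure Carnot (N : ℕ) where
  n : ℕ
  s : ℕ
  npos : 0 < n
  spos : 0 < s
  nle : n ≤ N
  d : Fin N → ℕ
  d_pos : ∀ i, 1 ≤ d i
  d_le : ∀ i, d i ≤ s
  d_horiz : ∀ i : Fin N, (i : ℕ) < n → d i = 1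
  Q : (Fin N → ℝ) → (Fin N → ℝ) → Fin N → ℝ
  Q_horiz : ∀ x y, ∀ i : Fin N, (i : ℕ) < n → Q x y i = 0
  Q_smooth : ∀ i, ContDiff ℝ (⊤ : ℕ∞) (fun p : (Fin N → ℝ) × (Fin N → ℝ) => Q p.1 p.2 i)
  Q_hom : ∀ (t : ℝ), 0 < t → ∀ x y (i : Fin N),
    Q (fun j => t ^ d j * x j) (fun j => t ^ d j * y j) i = t ^ d i * Q x y i
  Q_zero_left : ∀ x, Q 0 x = 0
  Q_zero_right : ∀ x, Q x 0 = 0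
  Q_inv : ∀ x, Q x (-x) = 0
  mul_assoc' : ∀ x y z : Fin N → ℝ,
    (x + y + Q x y) + z + Q (x + y + Q x y) z
      = x + (y + z + Q y z) + Q x (y + z + Q y z)
  Q_struct : ∀ i : Fin N, n ≤ (i : ℕ) → ∃ (M : ℕ)
    (p : Fin M → (Fin N → ℝ) → (Fin N → ℝ) → ℝ) (a b : Fin M → Fin N),
    (∀ m, (a m : ℕ) < (i : ℕ) ∧ (b m : ℕ) < (i : ℕ)) ∧
    ∀ x y, Q x y i = ∑ m, p m x y * (x (a m) * y (b m) - x (b m) * y (a m))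
  μ : Fin N → ℝ
  μ_pos : ∀ i, 0 < μ i
  hnorm_triangle : ∀ x y : Fin N → ℝ,
    (⨆ i, μ i * |(x + y + Q x y) i| ^ ((d i : ℝ)⁻¹)) ≤
      (⨆ i, μ i * |x i| ^ ((d i : ℝ)⁻¹)) + (⨆ i, μ i * |y i| ^ ((d i : ℝ)⁻¹))

namespace Carnot

variable {N : ℕ} (G : Carnot N)

/-- The Carnot group operation. -/
def mul (x y : Fin N → ℝ) : Fin N → ℝ := x + y + G.Q x y

/-- The Carnot dilation `δ_t (x) = (t^{d_1} x_1, …, t^{d_N} x_N)`. -/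
def dil (t : ℝ) (x : Fin N → ℝ) : Fin N → ℝ := fun i => t ^ G.d i * x i

/-- The homogeneous norm `‖x‖ = max_i μ_i |x_i|^{1/d_i}`. -/
noncomputable def hnorm (x : Fin N → ℝ) : ℝ :=
  ⨆ i, G.μ i * |x i| ^ ((G.d i : ℝ)⁻¹)

/-- The left invariant homogeneous metric `d(x,y) = ‖x⁻¹ · y‖`
(recall `x⁻¹ = -x` in exponential coordinates). -/
noncomputable def hdist (x y : Fin N → ℝ) : ℝ := G.hnorm (G.mul (-x) y)

/-- The left invariant horizontal vector fields
`X_j(x) = e_j + ∂Q(x,y)/∂y_j |_{y=0}`. -/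
noncomputable def X (j : Fin N) (x : Fin N → ℝ) : Fin N → ℝ :=
  (fun i => if i = j then (1 : ℝ) else 0) +
    fderiv ℝ (fun y => G.Q x y) 0 (fun i => if i = j then (1 : ℝ) else 0)

/-- A curve `γ` is horizontal at `t` if `γ'(t) = ∑_{j ≤ n} γ_j'(t) X_j(γ(t))`. -/
def IsHorizontalAt (γ : ℝ → Fin N → ℝ) (t : ℝ) : Prop :=
  ∃ v : Fin N → ℝ, HasDerivAt γ v t ∧
    v = ∑ j ∈ Finset.univ.filter (fun j : Fin N => (j : ℕ) < G.n), v j • G.X j (γ t)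

/-- Ordered product `l₀ · (l₁ · (⋯ · l_{k-1}))` of a list of group elements. -/
def prodList (l : List (Fin N → ℝ)) : Fin N → ℝ := l.foldr G.mul 0

/-- The horizontal velocity `h(t) = (γ₁'(t),…,γ_n'(t),0,…,0)` of a curve. -/
noncomputable def horizVel (γ : ℝ → Fin N → ℝ) (t : ℝ) : Fin N → ℝ :=
  fun k => if (k : ℕ) < G.n then deriv (fun τ => γ τ k) t else 0

end Carnot

/-- The Pansu difference quotient
`R(x,ξ;t) = δ̂_{1/t} (f(x)⁻¹ · f(x · δ_t ξ))`. -/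
noncomputable def pansuQuot {N N' : ℕ} (G : Carnot N) (G' : Carnot N')
    (f : (Fin N → ℝ) → Fin N' → ℝ) (x ξ : Fin N → ℝ) (t : ℝ) : Fin N' → ℝ :=
  G'.dil t⁻¹ (G'.mul (-(f x)) (f (G.mul x (G.dil t ξ))))

/-- `f` maps horizontal curves in `Ω` to horizontal curves. -/
def PreservesHorizontal {N N' : ℕ} (G : Carnot N) (G' : Carnot N')
    (Ω : Set (Fin N → ℝ)) (f : (Fin N → ℝ) → Fin N' → ℝ) : Prop :=
  ∀ (γ : ℝ → Fin N → ℝ) (a b : ℝ),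
    (∀ t ∈ Set.Icc a b, γ t ∈ Ω ∧ G.IsHorizontalAt γ t) →
    ∀ t ∈ Set.Icc a b, G'.IsHorizontalAt (fun τ => f (γ τ)) t

/-- A Euclidean modulus of continuity. -/
def IsModulus (ω : ℝ → ℝ) : Prop :=
  ContinuousOn ω (Set.Ici 0) ∧ ConcaveOn ℝ (Set.Ici 0) ω ∧
    MonotoneOn ω (Set.Ici 0) ∧ (∀ t ∈ Set.Ici (0 : ℝ), 0 ≤ ω t) ∧ ω 0 = 0


namespace CarnotAux

open Set

variable {N : ℕ} (G : Carnot N)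

lemma q_slice_smooth (x : Fin N → ℝ) (k : Fin N) :
    ContDiff ℝ (⊤ : ℕ∞) (fun y => G.Q x y k) :=
  (G.Q_smooth k).comp (contDiff_const.prodMk contDiff_id)

/-- The derivative of `y ↦ Q x y` at `0`, in direction `w`, component `k`. -/
noncomputable def Dq (k : Fin N) (x w : Fin N → ℝ) : ℝ :=
  fderiv ℝ (fun y => G.Q x y k) 0 w

lemma fderiv_comp_eq (x v : Fin N → ℝ) (k : Fin N) :
    (fderiv ℝ (fun y => G.Q x y) 0 v) k = Dq G k x v := by
  have hd : ∀ i : Fin N, DifferentiableAt ℝ (fun y => G.Q x y i) 0 :=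
    fun i => ((q_slice_smooth G x i).differentiable (by simp)) 0
  have h := fderiv_pi (𝕜 := ℝ) (φ := fun i y => G.Q x y i) (x := 0) hd
  rw [show (fun y => G.Q x y) = (fun y i => G.Q x y i) from rfl, h]
  rfl

lemma Dq_zero_left (k : Fin N) (w : Fin N → ℝ) : Dq G k 0 w = 0 := by
  unfold Dq
  have h : (fun y => G.Q 0 y k) = fun _ : Fin N → ℝ => (0:ℝ) := by
    funext y
    have := congrFun (G.Q_zero_left y) k
    simpa using this
  rw [h]
  simp

lemma contDiff_Dq (k : Fin N) :
    ContDiff ℝ (⊤ : ℕ∞) (fun p : (Fin N → ℝ) × (Fin N → ℝ) => Dq G k p.1 p.2) := by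
  have h1 : ContDiff ℝ (⊤ : ℕ∞) (fun x : Fin N → ℝ => fderiv ℝ (fun y => G.Q x y k) 0) := by
    have := ContDiff.fderiv (𝕜 := ℝ) (f := fun x y : Fin N → ℝ => G.Q x y k)
      (g := fun _ : Fin N → ℝ => (0 : Fin N → ℝ)) (n := (⊤ : ℕ∞)) (G.Q_smooth k) contDiff_const
      (by simp)
    exact this
  exact isBoundedBilinearMap_apply.contDiff.comp ((h1.comp contDiff_fst).prodMk contDiff_snd)

end CarnotAux

namespace CarnotAux

open Set

variable {N : ℕ} (G : Carnot N)

lemma Dq_line (k : Fin N) (hk : G.n ≤ (k : ℕ)) (c : Fin N → ℝ) (σ : ℝ) :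
    Dq G k (σ • c) c = 0 := by
  obtain ⟨M, p, a, b, -, hQ⟩ := G.Q_struct k hk
  have hzero : ∀ ε : ℝ, G.Q (σ • c) (ε • c) k = 0 := by
    intro ε
    rw [hQ]
    refine Finset.sum_eq_zero fun m _ => ?_
    simp only [Pi.smul_apply, smul_eq_mul]
    ring
  have hdiff : DifferentiableAt ℝ (fun y => G.Q (σ • c) y k) 0 :=
    ((q_slice_smooth G (σ • c) k).differentiable (by simp)) 0
  have h3 : HasDerivAt (fun ε : ℝ => ε • c) c 0 := by
    simpa using (hasDerivAt_id (0:ℝ)).smul_const c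
  have hF : HasFDerivAt (fun y => G.Q (σ • c) y k)
      (fderiv ℝ (fun y => G.Q (σ • c) y k) 0) ((fun ε : ℝ => ε • c) 0) := by
    simpa using hdiff.hasFDerivAt
  have h1 : HasDerivAt (fun ε : ℝ => G.Q (σ • c) (ε • c) k) (Dq G k (σ • c) c) 0 :=
    hF.comp_hasDerivAt_of_eq 0 h3 (by simp)
  have h0 : HasDerivAt (fun ε : ℝ => G.Q (σ • c) (ε • c) k) 0 0 := by
    have : (fun ε : ℝ => G.Q (σ • c) (ε • c) k) = fun _ => (0:ℝ) := funext hzero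
    rw [this]
    exact hasDerivAt_const _ _
  exact h1.unique h0

/-- The dilation as a continuous linear map. -/
noncomputable def dilL (t : ℝ) : (Fin N → ℝ) →L[ℝ] (Fin N → ℝ) :=
  ContinuousLinearMap.pi (fun i => (t ^ G.d i) • ContinuousLinearMap.proj i)

lemma dilL_eq_dil (t : ℝ) (x : Fin N → ℝ) : dilL G t x = G.dil t x := rfl

lemma Dq_hom (k : Fin N) (t : ℝ) (ht : 0 < t) (x w : Fin N → ℝ) :
    Dq G k (G.dil t x) (G.dil t w) = t ^ G.d k * Dq G k x w := by
  have hdiff : DifferentiableAt ℝ (fun y => G.Q (G.dil t x) y k) 0 :=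
    ((q_slice_smooth G (G.dil t x) k).differentiable (by simp)) 0
  have h1 : HasFDerivAt (fun y => G.Q (G.dil t x) (dilL G t y) k)
      ((fderiv ℝ (fun y => G.Q (G.dil t x) y k) 0).comp (dilL G t)) 0 := by
    have h0 : HasFDerivAt (fun y => G.Q (G.dil t x) y k)
        (fderiv ℝ (fun y => G.Q (G.dil t x) y k) 0) ((dilL G t) 0) := by
      rw [map_zero]; exact hdiff.hasFDerivAt
    exact h0.comp (0 : Fin N → ℝ) (dilL G t).hasFDerivAt
  have hfun : (fun y => G.Q (G.dil t x) (dilL G t y) k)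
      = fun y => t ^ G.d k * G.Q x y k := by
    funext y
    exact G.Q_hom t ht x y k
  rw [hfun] at h1
  have h2 : HasFDerivAt (fun y => t ^ G.d k * G.Q x y k)
      ((t ^ G.d k : ℝ) • fderiv ℝ (fun y => G.Q x y k) 0) 0 :=
    (((q_slice_smooth G x k).differentiable (by simp)) 0).hasFDerivAt.const_mul _
  have := h1.unique h2
  have happ := congrArg (fun L : (Fin N → ℝ) →L[ℝ] ℝ => L w) this
  simpa [Dq, dilL_eq_dil] using happ

end CarnotAux

namespace CarnotAux

open Set

variable {N : ℕ} (G : Carnot N)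

/-- The `m`-th coordinate vector. -/
noncomputable def sing {N : ℕ} (m : Fin N) : Fin N → ℝ := Pi.single m 1

lemma sing_apply {N : ℕ} (m j : Fin N) : sing m j = if j = m then (1:ℝ) else 0 := by
  simp [sing, Pi.single_apply]

lemma Dq_smul (k : Fin N) (x : Fin N → ℝ) (a : ℝ) (w : Fin N → ℝ) :
    Dq G k x (a • w) = a * Dq G k x w := by
  unfold Dq
  rw [map_smul]
  rfl

lemma dil_horiz (t : ℝ) (w : Fin N → ℝ) (hw : ∀ j : Fin N, G.n ≤ (j : ℕ) → w j = 0) :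
    G.dil t w = t • w := by
  funext j
  by_cases hj : (j : ℕ) < G.n
  · simp [Carnot.dil, G.d_horiz j hj]
  · simp [Carnot.dil, hw j (le_of_not_gt hj)]

lemma contDiff_Dq_left (k : Fin N) (w : Fin N → ℝ) :
    ContDiff ℝ (⊤ : ℕ∞) (fun z : Fin N → ℝ => Dq G k z w) :=
  (contDiff_Dq G k).comp (contDiff_id.prodMk contDiff_const)

lemma Dq_hom_left (k : Fin N) (t : ℝ) (ht : 0 < t) (z w : Fin N → ℝ)
    (hw : ∀ j : Fin N, G.n ≤ (j : ℕ) → w j = 0) :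
    Dq G k (G.dil t z) w = t ^ (G.d k - 1) * Dq G k z w := by
  have h1 : Dq G k (G.dil t z) (G.dil t w) = t ^ G.d k * Dq G k z w := Dq_hom G k t ht z w
  rw [dil_horiz G t w hw, Dq_smul] at h1
  have hd : G.d k = (G.d k - 1) + 1 := (Nat.succ_pred_eq_of_pos (G.d_pos k)).symm
  have h2 : t ^ G.d k = t * t ^ (G.d k - 1) := by
    nth_rewrite 1 [hd]; rw [pow_succ]; ring
  rw [h2, mul_assoc] at h1
  exact mul_left_cancel₀ (ne_of_gt ht) h1

lemma dilL_single (t : ℝ) (m : Fin N) :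
    dilL G t (sing m) = t ^ G.d m • sing m := by
  funext j
  have h : dilL G t (sing m) j = t ^ G.d j * sing m j := rfl
  rw [h]
  by_cases hj : j = m
  · subst hj; simp [sing_apply]
  · simp [sing_apply, hj]

lemma Dq_partial_zero (k m : Fin N) (hm : G.d k ≤ G.d m) (w : Fin N → ℝ)
    (hw : ∀ j : Fin N, G.n ≤ (j : ℕ) → w j = 0) (x : Fin N → ℝ) :
    fderiv ℝ (fun z => Dq G k z w) x (sing m) = 0 := by
  set F : (Fin N → ℝ) → ℝ := fun z => Dq G k z w with hF
  have hFc : ContDiff ℝ (⊤ : ℕ∞) F := contDiff_Dq_left G k w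
  have hFd : Differentiable ℝ F := hFc.differentiable (by simp)
  set e : ℕ := G.d m - (G.d k - 1) with he
  have he1 : 1 ≤ e := by
    have h1 := G.d_pos k
    omega
  have hsum : (G.d k - 1) + e = G.d m := by
    have h1 := G.d_pos k
    omega
  have key : ∀ lam : ℝ, 0 < lam →
      fderiv ℝ F x (sing m) = lam ^ e * fderiv ℝ F (G.dil lam x) (sing m) := by
    intro lam hlam
    have hfun : (fun z => F (dilL G lam z)) = fun z => lam ^ (G.d k - 1) * F z := by
      funext z
      exact Dq_hom_left G k lam hlam z w hw
    have hchain : HasFDerivAt (fun z => F (dilL G lam z))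
        ((fderiv ℝ F (dilL G lam x)).comp (dilL G lam)) x :=
      (hFd (dilL G lam x)).hasFDerivAt.comp x (dilL G lam).hasFDerivAt
    have hrhs : HasFDerivAt (fun z => lam ^ (G.d k - 1) * F z)
        ((lam ^ (G.d k - 1) : ℝ) • fderiv ℝ F x) x :=
      (hFd x).hasFDerivAt.const_mul _
    rw [hfun] at hchain
    have heq := hchain.unique hrhs
    have happ := congrArg (fun L : (Fin N → ℝ) →L[ℝ] ℝ => L (sing m)) heq
    simp only [ContinuousLinearMap.comp_apply, ContinuousLinearMap.smul_apply,
      smul_eq_mul] at happ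
    rw [dilL_single, map_smul, smul_eq_mul, dilL_eq_dil] at happ
    have hpow : lam ^ G.d m = lam ^ (G.d k - 1) * lam ^ e := by
      rw [← pow_add, hsum]
    rw [hpow, mul_assoc] at happ
    exact (mul_left_cancel₀ (a := lam ^ (G.d k - 1))
      (pow_ne_zero _ (ne_of_gt hlam)) happ).symm
  have hcontdil : Continuous (fun lam : ℝ => G.dil lam x) := by
    refine continuous_pi fun i => ?_
    exact (continuous_pow (G.d i)).mul continuous_const
  have hcontfd : Continuous (fun z : Fin N → ℝ => fderiv ℝ F z (sing m)) :=
    (hFc.continuous_fderiv (by simp)).clm_apply continuous_const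
  have htend : Filter.Tendsto (fun lam : ℝ => lam ^ e * fderiv ℝ F (G.dil lam x) (sing m))
      (nhds 0) (nhds 0) := by
    have h1 : Filter.Tendsto (fun lam : ℝ => lam ^ e) (nhds (0:ℝ)) (nhds 0) := by
      have := (continuous_pow e).tendsto (0:ℝ)
      simpa [zero_pow (by omega : e ≠ 0)] using this
    have h2 := (hcontfd.comp hcontdil).tendsto 0
    have := h1.mul h2
    simpa using this
  have htend' : Filter.Tendsto (fun lam : ℝ => lam ^ e * fderiv ℝ F (G.dil lam x) (sing m))
      (nhdsWithin 0 (Ioi 0)) (nhds 0) :=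
    htend.mono_left nhdsWithin_le_nhds
  have hconst : Filter.Tendsto (fun lam : ℝ => lam ^ e * fderiv ℝ F (G.dil lam x) (sing m))
      (nhdsWithin 0 (Ioi 0)) (nhds (fderiv ℝ F x (sing m))) := by
    apply Filter.Tendsto.congr' _ tendsto_const_nhds
    filter_upwards [self_mem_nhdsWithin] with lam hlam
    exact key lam hlam
  exact tendsto_nhds_unique hconst htend'

lemma Dq_proj (k : Fin N) (x w : Fin N → ℝ)
    (hw : ∀ j : Fin N, G.n ≤ (j : ℕ) → w j = 0) :
    Dq G k x w = Dq G k (fun m => if G.d m < G.d k then x m else 0) w := by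
  set y : Fin N → ℝ := fun m => if G.d m < G.d k then x m else 0 with hy
  set F : (Fin N → ℝ) → ℝ := fun z => Dq G k z w with hF
  have hFd : Differentiable ℝ F := (contDiff_Dq_left G k w).differentiable (by simp)
  have key : ∀ z : Fin N → ℝ, fderiv ℝ F z (y - x) = 0 := by
    intro z
    have hdecomp : (y - x : Fin N → ℝ) = ∑ m, ((y - x) m) • sing m := by
      have h1 := Finset.univ_sum_single (y - x)
      rw [← h1]
      refine Finset.sum_congr rfl fun m _ => ?_
      funext j
      by_cases hj : j = m
      · subst hj; simp [sing_apply]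
      · simp [sing_apply, hj, Pi.single_apply]
    rw [hdecomp, map_sum]
    refine Finset.sum_eq_zero fun m _ => ?_
    rw [map_smul, smul_eq_mul]
    by_cases h : G.d m < G.d k
    · have h0 : (y - x) m = 0 := by simp [hy, h]
      rw [h0, zero_mul]
    · rw [Dq_partial_zero G k m (le_of_not_gt h) w hw z, mul_zero]
  have hg : ∀ s ∈ Icc (0:ℝ) 1,
      HasDerivWithinAt (fun s : ℝ => F (x + s • (y - x))) 0 (Icc 0 1) s := by
    intro s hs
    have hinner : HasDerivAt (fun s : ℝ => x + s • (y - x)) (y - x) s := by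
      simpa using ((hasDerivAt_id s).smul_const (y - x)).const_add x
    have houter : HasFDerivAt F (fderiv ℝ F (x + s • (y - x))) (x + s • (y - x)) :=
      (hFd _).hasFDerivAt
    have hcomp := houter.comp_hasDerivAt s hinner
    rw [key] at hcomp
    exact hcomp.hasDerivWithinAt
  have hbound : ∀ s ∈ Ico (0:ℝ) 1, ‖(0:ℝ)‖ ≤ 0 := by simp
  have hest := norm_image_sub_le_of_norm_deriv_le_segment' (f' := fun _ => (0:ℝ)) hg hbound 1
    (by constructor <;> norm_num)
  have h01 : F (x + (1:ℝ) • (y - x)) = F (x + (0:ℝ) • (y - x)) := by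
    have hle : ‖F (x + (1:ℝ) • (y - x)) - F (x + (0:ℝ) • (y - x))‖ ≤ 0 := by
      simpa using hest
    have h2 := norm_le_zero_iff.mp hle
    linarith [sub_eq_zero.mp h2]
  simp only [one_smul, zero_smul, add_zero] at h01
  have hxy : x + (y - x) = y := by abel
  rw [hxy] at h01
  exact h01.symm

end CarnotAux

namespace CarnotAux

open Set

variable {N : ℕ} (G : Carnot N)

lemma deriv_eq_Dq (f : ℝ → Fin N → ℝ) (t : ℝ) (hhor : G.IsHorizontalAt f t)
    (k : Fin N) (hk : G.n ≤ (k : ℕ)) :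
    HasDerivAt (fun τ => f τ k) (Dq G k (f t) (G.horizVel f t)) t := by
  obtain ⟨v, hv, heq⟩ := hhor
  have hcomp : ∀ j, HasDerivAt (fun τ => f τ j) (v j) t := fun j => (hasDerivAt_pi.1 hv) j
  have hvel : G.horizVel f t = fun m : Fin N => if (m : ℕ) < G.n then v m else 0 := by
    funext m
    unfold Carnot.horizVel
    by_cases hm : (m : ℕ) < G.n
    · simp [hm, (hcomp m).deriv]
    · simp [hm]
  have hvk : v k = Dq G k (f t) (G.horizVel f t) := by
    have h1 := congrFun heq k
    rw [Finset.sum_apply] at h1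
    have h2 : ∀ j ∈ Finset.univ.filter (fun j : Fin N => (j : ℕ) < G.n),
        (v j • G.X j (f t)) k = v j * Dq G k (f t) (sing j) := by
      intro j hj
      have hjn : (j : ℕ) < G.n := by simpa using hj
      have hkj : k ≠ j := by
        intro h; rw [h] at hk; omega
      have hX : G.X j (f t) k = Dq G k (f t) (sing j) := by
        unfold Carnot.X
        have he : (fun i : Fin N => if i = j then (1:ℝ) else 0) = sing j := by
          funext i; rw [sing_apply]
        rw [Pi.add_apply, he, fderiv_comp_eq]
        simp [hkj]
      rw [Pi.smul_apply, hX, smul_eq_mul]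
    rw [Finset.sum_congr rfl h2] at h1
    have h3 : ∑ j ∈ Finset.univ.filter (fun j : Fin N => (j : ℕ) < G.n),
        v j * Dq G k (f t) (sing j)
        = Dq G k (f t) (∑ j ∈ Finset.univ.filter (fun j : Fin N => (j : ℕ) < G.n),
            v j • sing j) := by
      unfold Dq
      rw [map_sum]
      refine Finset.sum_congr rfl fun j _ => ?_
      rw [map_smul]
      rfl
    rw [h3] at h1
    have h4 : (∑ j ∈ Finset.univ.filter (fun j : Fin N => (j : ℕ) < G.n), v j • sing j)
        = G.horizVel f t := by
      funext m
      rw [Finset.sum_apply, hvel]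
      have h5 : ∀ j ∈ Finset.univ.filter (fun j : Fin N => (j : ℕ) < G.n),
          (v j • sing j) m = if m = j then v j else 0 := by
        intro j _
        rw [Pi.smul_apply, sing_apply, smul_eq_mul]
        by_cases h : m = j <;> simp [h]
      rw [Finset.sum_congr rfl h5, Finset.sum_ite_eq]
      simp
    rw [h4] at h1
    exact h1
  exact hvk ▸ hcomp k

end CarnotAux

set_option maxHeartbeats 1000000 in
open CarnotAux in
/-- The non-horizontal components of a horizontal curve starting at the origin
with `C¹` horizontal components satisfy `|f_i(t)| ≤ C t^{d_i} ω(t)`. -/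
theorem nonhorizontal_components_bound {N : ℕ} (G : Carnot N)
    (t₀ : ℝ) (ht₀ : 0 ≤ t₀) (f : ℝ → Fin N → ℝ) (hf0 : f 0 = 0)
    (hhor : ∀ t ∈ Set.Icc 0 t₀, G.IsHorizontalAt f t)
    (hC1 : ∀ i : Fin N, (i : ℕ) < G.n →
      ContDiffOn ℝ 1 (fun τ => f τ i) (Set.Icc 0 t₀))
    (ω : ℝ → ℝ) (hω : IsModulus ω)
    (hmod : ∀ i : Fin N, (i : ℕ) < G.n → ∀ t ∈ Set.Icc 0 t₀,
      |deriv (fun τ => f τ i) t - deriv (fun τ => f τ i) 0| ≤ ω t) :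
    ∃ C > 0, ∀ i : Fin N, G.n ≤ (i : ℕ) → ∀ t ∈ Set.Icc 0 t₀,
      |f t i| ≤ C * t ^ G.d i * ω t := by
  classical
  obtain ⟨hωc, hωcc, hωmono, hωnn, hωzero⟩ := hω
  set I : Set ℝ := Set.Icc (0:ℝ) t₀ with hIdef
  have hf0' : ∀ k : Fin N, f 0 k = 0 := fun k => congrFun hf0 k
  have hωt : ∀ t ∈ I, 0 ≤ ω t := fun t ht => hωnn t (Set.mem_Ici.2 ht.1)
  have hωT : 0 ≤ ω t₀ := hωnn t₀ (Set.mem_Ici.2 ht₀)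
  have hωmono' : ∀ s t : ℝ, 0 ≤ s → s ≤ t → ω s ≤ ω t :=
    fun s t hs hst => hωmono (Set.mem_Ici.2 hs) (Set.mem_Ici.2 (hs.trans hst)) hst
  have hωle : ∀ t ∈ I, ω t ≤ ω t₀ := fun t ht => hωmono' t t₀ ht.1 ht.2
  -- differentiability of all components
  have hdiff : ∀ t ∈ I, ∀ k : Fin N,
      HasDerivAt (fun τ => f τ k) (deriv (fun τ => f τ k) t) t := by
    intro t ht k
    obtain ⟨v, hv, -⟩ := hhor t ht
    have h := (hasDerivAt_pi.1 hv) k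
    exact h.deriv ▸ h
  -- structure of the derivative of nonhorizontal components
  set H : ℝ → Fin N → ℝ := fun t => G.horizVel f t with hHdef
  have hder : ∀ t ∈ I, ∀ k : Fin N, G.n ≤ (k : ℕ) →
      HasDerivAt (fun τ => f τ k) (Dq G k (f t) (H t)) t :=
    fun t ht k hk => deriv_eq_Dq G f t (hhor t ht) k hk
  -- the initial horizontal velocity
  set c : Fin N → ℝ := fun m : Fin N =>
    if (m : ℕ) < G.n then deriv (fun τ => f τ m) 0 else 0 with hcdef
  have hchoriz : ∀ j : Fin N, G.n ≤ (j : ℕ) → c j = 0 := by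
    intro j hj; simp only [hcdef]; rw [if_neg (Nat.not_lt.2 hj)]
  have hHhoriz : ∀ t : ℝ, ∀ j : Fin N, G.n ≤ (j : ℕ) → H t j = 0 := by
    intro t j hj
    simp only [hHdef, Carnot.horizVel]
    rw [if_neg (Nat.not_lt.2 hj)]
  -- mean value inequality helper
  have MVT : ∀ (g g' : ℝ → ℝ) (t K : ℝ), t ∈ I →
      (∀ s ∈ Set.Icc (0:ℝ) t, HasDerivAt g (g' s) s) →
      (∀ s ∈ Set.Icc (0:ℝ) t, |g' s| ≤ K) → |g t - g 0| ≤ K * t := by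
    intro g g' t K ht hg hb
    have h := norm_image_sub_le_of_norm_deriv_le_segment'
      (f' := g') (fun s hs => (hg s hs).hasDerivWithinAt)
      (fun s hs => hb s (Set.Ico_subset_Icc_self hs)) t (Set.mem_Icc.2 ⟨ht.1, le_refl t⟩)
    simpa [Real.norm_eq_abs] using h
  -- horizontal component estimates
  have hhoriz1 : ∀ j : Fin N, (j : ℕ) < G.n → ∀ t ∈ I, |f t j - c j * t| ≤ ω t * t := by
    intro j hj t ht
    have hcj : c j = deriv (fun τ => f τ j) 0 := by
      simp only [hcdef]; rw [if_pos hj]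
    have hsub : Set.Icc (0:ℝ) t ⊆ I := Set.Icc_subset_Icc le_rfl ht.2
    have hg : ∀ s ∈ Set.Icc (0:ℝ) t,
        HasDerivAt (fun τ => f τ j - c j * τ) (deriv (fun τ => f τ j) s - c j) s := by
      intro s hs
      have h1 : HasDerivAt (fun τ : ℝ => c j * τ) (c j) s := by
        simpa using (hasDerivAt_id s).const_mul (c j)
      exact (hdiff s (hsub hs) j).sub h1
    have hb : ∀ s ∈ Set.Icc (0:ℝ) t, |deriv (fun τ => f τ j) s - c j| ≤ ω t := by
      intro s hs
      have h1 := hmod j hj s (hsub hs)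
      rw [← hcj] at h1
      exact h1.trans (hωmono' s t hs.1 hs.2)
    have h := MVT _ _ t (ω t) ht hg hb
    simpa [hf0' j] using h
  -- velocity comparison
  have hHc : ∀ t ∈ I, ∀ m : Fin N, |H t m - c m| ≤ ω t := by
    intro t ht m
    by_cases hm : (m : ℕ) < G.n
    · have h1 : H t m = deriv (fun τ => f τ m) t := by
        simp only [hHdef, Carnot.horizVel]; rw [if_pos hm]
      have h2 : c m = deriv (fun τ => f τ m) 0 := by
        simp only [hcdef]; rw [if_pos hm]
      rw [h1, h2]; exact hmod m hm t ht
    · rw [hHhoriz t m (Nat.not_lt.1 hm), hchoriz m (Nat.not_lt.1 hm)]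
      simpa using hωt t ht
  have hcnorm : ∀ m : Fin N, |c m| ≤ ‖c‖ := by
    intro m
    have := norm_le_pi_norm c m
    simpa [Real.norm_eq_abs] using this
  have hHnorm : ∀ t ∈ I, ∀ m : Fin N, |H t m| ≤ ‖c‖ + ω t₀ := by
    intro t ht m
    have h1 := hHc t ht m
    calc |H t m| = |c m + (H t m - c m)| := by ring_nf
      _ ≤ |c m| + |H t m - c m| := abs_add_le _ _
      _ ≤ ‖c‖ + ω t₀ := add_le_add (hcnorm m) (h1.trans (hωle t ht))
  -- the main induction on the degree
  have main : ∀ r : ℕ, ∀ k : Fin N, G.n ≤ (k : ℕ) → G.d k ≤ r →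
      ∃ C, 0 ≤ C ∧ ∀ t ∈ I, |f t k| ≤ C * t ^ G.d k * ω t := by
    intro r
    induction r with
    | zero => intro k hk hdk; have := G.d_pos k; omega
    | succ r ih =>
      -- a uniform constant for lower degrees
      have ihu : ∃ Cr, 0 ≤ Cr ∧ ∀ m : Fin N, G.n ≤ (m : ℕ) → G.d m ≤ r → ∀ t ∈ I,
          |f t m| ≤ Cr * t ^ G.d m * ω t := by
        have hex : ∀ m : Fin N, ∃ Cm, 0 ≤ Cm ∧ (G.n ≤ (m : ℕ) → G.d m ≤ r → ∀ t ∈ I,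
            |f t m| ≤ Cm * t ^ G.d m * ω t) := by
          intro m
          by_cases hm : G.n ≤ (m : ℕ) ∧ G.d m ≤ r
          · obtain ⟨C, hC0, hC⟩ := ih m hm.1 hm.2
            exact ⟨C, hC0, fun _ _ => hC⟩
          · exact ⟨0, le_rfl, fun h1 h2 => absurd ⟨h1, h2⟩ hm⟩
        choose Cm hCm0 hCm using hex
        refine ⟨∑ m, Cm m, Finset.sum_nonneg (fun m _ => hCm0 m), fun m hm1 hm2 t ht => ?_⟩
        refine (hCm m hm1 hm2 t ht).trans ?_
        have h1 : Cm m ≤ ∑ m', Cm m' :=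
          Finset.single_le_sum (fun i _ => hCm0 i) (Finset.mem_univ m)
        have h2 : 0 ≤ t ^ G.d m * ω t := mul_nonneg (pow_nonneg ht.1 _) (hωt t ht)
        calc Cm m * t ^ G.d m * ω t = Cm m * (t ^ G.d m * ω t) := by ring
          _ ≤ (∑ m', Cm m') * (t ^ G.d m * ω t) := mul_le_mul_of_nonneg_right h1 h2
          _ = (∑ m', Cm m') * t ^ G.d m * ω t := by ring
      obtain ⟨Cr, hCr0, hCr⟩ := ihu
      intro k hk hdk
      -- the projected initial velocity
      set V : Fin N → ℝ := fun m : Fin N => if G.d m < G.d k then c m else 0 with hVdef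
      have hVc : Dq G k V c = 0 := by
        by_cases h2 : 2 ≤ G.d k
        · have hVc' : V = c := by
            funext m
            by_cases hm : G.d m < G.d k
            · simp only [hVdef]; rw [if_pos hm]
            · have hcm : c m = 0 := by
                by_cases hmn : (m : ℕ) < G.n
                · exfalso; have := G.d_horiz m hmn; omega
                · exact hchoriz m (Nat.not_lt.1 hmn)
              simp only [hVdef]; rw [if_neg hm, hcm]
          rw [hVc']
          have h := Dq_line G k hk c 1
          simpa using h
        · have hV0 : V = 0 := by
            funext m
            have := G.d_pos m
            have hdk1 : G.d k = 1 := by have := G.d_pos k; omega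
            simp only [hVdef]; rw [if_neg (by omega)]; rfl
          rw [hV0]; exact Dq_zero_left G k c
      have hVnorm : ∀ m : Fin N, |V m| ≤ ‖c‖ := by
        intro m
        by_cases hm : G.d m < G.d k
        · simp only [hVdef]; rw [if_pos hm]; exact hcnorm m
        · simp only [hVdef]; rw [if_neg hm]; simpa using norm_nonneg c
      -- constants
      set B : ℝ := ‖c‖ + ω t₀ + Cr * ω t₀ with hBdef
      have hB0 : 0 ≤ B := by positivity
      set K : Set ((Fin N → ℝ) × (Fin N → ℝ)) := Metric.closedBall 0 B with hKdef
      set Φ : ((Fin N → ℝ) × (Fin N → ℝ)) → ℝ := fun p => Dq G k p.1 p.2 with hΦdef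
      have hΦc : ContDiff ℝ (⊤ : ℕ∞) Φ := contDiff_Dq G k
      have hcpt : IsCompact K := isCompact_closedBall _ _
      obtain ⟨L, hL⟩ := hcpt.exists_bound_of_continuousOn
        ((hΦc.continuous_fderiv (by simp)).continuousOn)
      set L' : ℝ := max L 0 with hLdef
      have hL'0 : (0:ℝ) ≤ L' := le_max_right _ _
      have hlip : ∀ p q : (Fin N → ℝ) × (Fin N → ℝ), p ∈ K → q ∈ K →
          |Φ p - Φ q| ≤ L' * ‖p - q‖ := by
        intro p q hp hq
        have h := Convex.norm_image_sub_le_of_norm_fderiv_le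
          (f := Φ) (C := L') (s := K)
          (fun z _ => (hΦc.differentiable (by simp)) z)
          (fun z hz => (hL z hz).trans (le_max_left _ _))
          (convex_closedBall _ _) hq hp
        simpa [Real.norm_eq_abs] using h
      -- pointwise derivative bound
      have hDbound : ∀ t ∈ I, |Dq G k (f t) (H t)|
          ≤ t ^ (G.d k - 1) * (L' * ((1 + Cr) * ω t)) := by
        intro t ht
        rcases eq_or_lt_of_le ht.1 with h0 | h0
        · rw [← h0, hf0]
          rw [Dq_zero_left]
          have : ω (0:ℝ) = 0 := hωzero
          simp [this]
        · -- 0 < t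
          set U : Fin N → ℝ := fun m : Fin N =>
            if G.d m < G.d k then f t m / t ^ G.d m else 0 with hUdef
          have htne : (t:ℝ) ≠ 0 := ne_of_gt h0
          have s1 : Dq G k (f t) (H t)
              = Dq G k (fun m => if G.d m < G.d k then f t m else 0) (H t) :=
            Dq_proj G k (f t) (H t) (hHhoriz t)
          have s2 : (fun m : Fin N => if G.d m < G.d k then f t m else 0) = G.dil t U := by
            funext m
            by_cases hm : G.d m < G.d k
            · simp only [hUdef, Carnot.dil]
              rw [if_pos hm, if_pos hm, mul_comm, div_mul_cancel₀ _ (pow_ne_zero _ htne)]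
            · simp only [hUdef, Carnot.dil]
              rw [if_neg hm, if_neg hm, mul_zero]
          have s3 : Dq G k (G.dil t U) (H t) = t ^ (G.d k - 1) * Dq G k U (H t) :=
            Dq_hom_left G k t h0 U (H t) (hHhoriz t)
          -- componentwise bounds on U
          have hUB : ∀ m : Fin N, |U m| ≤ B := by
            intro m
            by_cases hm : G.d m < G.d k
            · by_cases hmn : (m : ℕ) < G.n
              · have hd1 : G.d m = 1 := G.d_horiz m hmn
                have h1 := hhoriz1 m hmn t ht
                have h2 : |f t m| ≤ |c m| * t + ω t * t := by
                  have := abs_sub_abs_le_abs_sub (f t m) (c m * t)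
                  have habs : |c m * t| = |c m| * t := by
                    rw [abs_mul, abs_of_pos h0]
                  nlinarith [h1, abs_nonneg (f t m - c m * t)]
                have h3 : |U m| = |f t m| / t := by
                  simp only [hUdef]
                  rw [if_pos hm, hd1, pow_one, abs_div, abs_of_pos h0]
                rw [h3]
                rw [div_le_iff₀ h0]
                calc |f t m| ≤ |c m| * t + ω t * t := h2
                  _ ≤ (‖c‖ + ω t₀) * t := by
                      have := hcnorm m
                      have := hωle t ht
                      nlinarith
                  _ ≤ B * t := by
                      have hB1 : ‖c‖ + ω t₀ ≤ B := by
                        simp only [hBdef]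
                        nlinarith [mul_nonneg hCr0 hωT]
                      nlinarith
              · have hmr : G.d m ≤ r := by omega
                have h1 := hCr m (Nat.not_lt.1 hmn) hmr t ht
                have h3 : |U m| = |f t m| / t ^ G.d m := by
                  simp only [hUdef]
                  rw [if_pos hm, abs_div, abs_of_pos (pow_pos h0 _)]
                rw [h3, div_le_iff₀ (pow_pos h0 _)]
                calc |f t m| ≤ Cr * t ^ G.d m * ω t := h1
                  _ ≤ B * t ^ G.d m := by
                      have h4 : Cr * ω t ≤ Cr * ω t₀ :=
                        mul_le_mul_of_nonneg_left (hωle t ht) hCr0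
                      have h5 : Cr * ω t₀ ≤ B := by
                        simp only [hBdef]
                        nlinarith [norm_nonneg c, hωT]
                      have h6 : (0:ℝ) ≤ t ^ G.d m := le_of_lt (pow_pos h0 _)
                      nlinarith [mul_nonneg hCr0 (hωt t ht)]
            · simp only [hUdef]; rw [if_neg hm]; simpa using hB0
          -- componentwise difference bounds
          have hUV : ∀ m : Fin N, |U m - V m| ≤ (1 + Cr) * ω t := by
            intro m
            by_cases hm : G.d m < G.d k
            · by_cases hmn : (m : ℕ) < G.n
              · have hd1 : G.d m = 1 := G.d_horiz m hmn
                have h1 := hhoriz1 m hmn t ht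
                have h2 : U m - V m = (f t m - c m * t) / t := by
                  simp only [hUdef, hVdef]
                  rw [if_pos hm, if_pos hm, hd1, pow_one, sub_div,
                    mul_comm (c m) t, mul_div_cancel_left₀ _ htne]
                rw [h2, abs_div, abs_of_pos h0, div_le_iff₀ h0]
                calc |f t m - c m * t| ≤ ω t * t := h1
                  _ ≤ (1 + Cr) * ω t * t := by nlinarith [mul_nonneg (mul_nonneg hCr0 (hωt t ht)) h0.le]
              · have hmr : G.d m ≤ r := by omega
                have h1 := hCr m (Nat.not_lt.1 hmn) hmr t ht
                have hcm : c m = 0 := hchoriz m (Nat.not_lt.1 hmn)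
                have h2 : V m = 0 := by simp only [hVdef]; rw [if_pos hm, hcm]
                have h3 : |U m| = |f t m| / t ^ G.d m := by
                  simp only [hUdef]
                  rw [if_pos hm, abs_div, abs_of_pos (pow_pos h0 _)]
                rw [h2, sub_zero, h3, div_le_iff₀ (pow_pos h0 _)]
                calc |f t m| ≤ Cr * t ^ G.d m * ω t := h1
                  _ ≤ (1 + Cr) * ω t * t ^ G.d m := by
                      nlinarith [hωt t ht, pow_pos h0 (G.d m), mul_nonneg (hωt t ht) (le_of_lt (pow_pos h0 (G.d m)))]
            · simp only [hUdef, hVdef]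
              rw [if_neg hm, if_neg hm, sub_zero]
              simpa using mul_nonneg (by linarith : (0:ℝ) ≤ 1 + Cr) (hωt t ht)
          -- memberships
          have hmem1 : ((U, H t) : (Fin N → ℝ) × (Fin N → ℝ)) ∈ K := by
            rw [hKdef, Metric.mem_closedBall, dist_zero_right, Prod.norm_def]
            refine max_le ?_ ?_
            · exact pi_norm_le_iff_of_nonneg hB0 |>.2 fun m => by
                simpa [Real.norm_eq_abs] using hUB m
            · refine pi_norm_le_iff_of_nonneg hB0 |>.2 fun m => ?_
              have := hHnorm t ht m
              have hB1 : ‖c‖ + ω t₀ ≤ B := by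
                simp only [hBdef]; nlinarith [mul_nonneg hCr0 hωT]
              simpa [Real.norm_eq_abs] using this.trans hB1
          have hmem2 : ((V, c) : (Fin N → ℝ) × (Fin N → ℝ)) ∈ K := by
            rw [hKdef, Metric.mem_closedBall, dist_zero_right, Prod.norm_def]
            have hB1 : ‖c‖ ≤ B := by
              simp only [hBdef]; nlinarith [mul_nonneg hCr0 hωT, hωT]
            refine max_le ?_ (le_trans ?_ hB1)
            · refine pi_norm_le_iff_of_nonneg hB0 |>.2 fun m => ?_
              simpa [Real.norm_eq_abs] using (hVnorm m).trans hB1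
            · exact le_refl ‖c‖
          -- apply the Lipschitz bound
          have hdist : ‖((U, H t) : (Fin N → ℝ) × (Fin N → ℝ)) - (V, c)‖ ≤ (1 + Cr) * ω t := by
            have hnn : (0:ℝ) ≤ (1 + Cr) * ω t :=
              mul_nonneg (by linarith) (hωt t ht)
            rw [Prod.norm_def]
            refine max_le ?_ ?_
            · refine pi_norm_le_iff_of_nonneg hnn |>.2 fun m => ?_
              simpa [Real.norm_eq_abs] using hUV m
            · refine pi_norm_le_iff_of_nonneg hnn |>.2 fun m => ?_
              have h1 := hHc t ht m
              have h2 : ω t ≤ (1 + Cr) * ω t := by nlinarith [hωt t ht]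
              simpa [Real.norm_eq_abs] using h1.trans h2
          have hlip1 := hlip (U, H t) (V, c) hmem1 hmem2
          have hΦ1 : Φ ((U, H t) : (Fin N → ℝ) × (Fin N → ℝ)) = Dq G k U (H t) := rfl
          have hΦ2 : Φ ((V, c) : (Fin N → ℝ) × (Fin N → ℝ)) = 0 := hVc
          rw [hΦ1, hΦ2, sub_zero] at hlip1
          have hDU : |Dq G k U (H t)| ≤ L' * ((1 + Cr) * ω t) :=
            hlip1.trans (mul_le_mul_of_nonneg_left hdist hL'0)
          rw [s1, s2, s3, abs_mul, abs_of_pos (pow_pos h0 _)]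
          exact mul_le_mul_of_nonneg_left hDU (le_of_lt (pow_pos h0 _))
      -- integrate the derivative bound
      refine ⟨L' * (1 + Cr), mul_nonneg hL'0 (by linarith), fun t ht => ?_⟩
      have hsub : Set.Icc (0:ℝ) t ⊆ I := Set.Icc_subset_Icc le_rfl ht.2
      have hg : ∀ s ∈ Set.Icc (0:ℝ) t,
          HasDerivAt (fun τ => f τ k) (Dq G k (f s) (H s)) s :=
        fun s hs => hder s (hsub hs) k hk
      have hb : ∀ s ∈ Set.Icc (0:ℝ) t,
          |Dq G k (f s) (H s)| ≤ t ^ (G.d k - 1) * (L' * ((1 + Cr) * ω t)) := by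
        intro s hs
        refine (hDbound s (hsub hs)).trans ?_
        have h1 : s ^ (G.d k - 1) ≤ t ^ (G.d k - 1) := pow_le_pow_left₀ hs.1 hs.2 _
        have h2 : ω s ≤ ω t := hωmono' s t hs.1 hs.2
        have h3 : 0 ≤ ω s := hωnn s (Set.mem_Ici.2 hs.1)
        have h4 : (0:ℝ) ≤ s ^ (G.d k - 1) := pow_nonneg hs.1 _
        have h5 : (0:ℝ) ≤ t ^ (G.d k - 1) := pow_nonneg (hs.1.trans hs.2) _
        have h6 : L' * ((1 + Cr) * ω s) ≤ L' * ((1 + Cr) * ω t) := by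
          refine mul_le_mul_of_nonneg_left ?_ hL'0
          exact mul_le_mul_of_nonneg_left h2 (by linarith)
        have h7 : (0:ℝ) ≤ L' * ((1 + Cr) * ω s) :=
          mul_nonneg hL'0 (mul_nonneg (by linarith) h3)
        exact mul_le_mul h1 h6 h7 h5
      have hMVT := MVT (fun τ => f τ k) _ t _ ht hg hb
      simp only [hf0' k, sub_zero] at hMVT
      refine hMVT.trans (le_of_eq ?_)
      have hd : G.d k = (G.d k - 1) + 1 := (Nat.succ_pred_eq_of_pos (G.d_pos k)).symm
      have hpow : t ^ G.d k = t ^ (G.d k - 1) * t := by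
        nth_rewrite 1 [hd]; rw [pow_succ]
      rw [hpow]; ring
  -- assemble the final uniform constant
  have hfin : ∀ k : Fin N, ∃ C, 0 ≤ C ∧ (G.n ≤ (k : ℕ) → ∀ t ∈ I,
      |f t k| ≤ C * t ^ G.d k * ω t) := by
    intro k
    by_cases hk : G.n ≤ (k : ℕ)
    · obtain ⟨C, h0, h⟩ := main G.s k hk (G.d_le k)
      exact ⟨C, h0, fun _ => h⟩
    · exact ⟨0, le_rfl, fun h => absurd h hk⟩
  choose CC hCC0 hCC using hfin
  have hsumnn : (0:ℝ) ≤ ∑ m, CC m := Finset.sum_nonneg (fun i _ => hCC0 i)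
  refine ⟨1 + ∑ m, CC m, by linarith, fun k hk t ht => ?_⟩
  · refine (hCC k hk t ht).trans ?_
    have h1 : CC k ≤ 1 + ∑ m, CC m := by
      have := Finset.single_le_sum (fun i _ => hCC0 i) (Finset.mem_univ k)
      linarith
    have h2 : 0 ≤ t ^ G.d k * ω t := mul_nonneg (pow_nonneg ht.1 _) (hωt t ht)
    calc CC k * t ^ G.d k * ω t = CC k * (t ^ G.d k * ω t) := by ring
      _ ≤ (1 + ∑ m, CC m) * (t ^ G.d k * ω t) := mul_le_mul_of_nonneg_right h1 h2
      _ = (1 + ∑ m, CC m) * t ^ G.d k * ω t := by ring
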